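/- Let o_A be a nonzero spinor and set κ_{AB} = o_A o_B. If Ψ_{ABCD} ∈ Sym⁴ is a totally symmetric four-index spinor satisfying Ψ_{(ABC}{}^F κ_{D)F} = 0, then there exists a scalar ψ ∈ ℂ such that Ψ_{ABCD} = ψ o_A o_B o_C o_D (i.e. Ψ is of type N with quadruple principal spinor o). -/

import Mathlib

open scoped BigOperators

noncomputable section

/-- One-index spinors (lower index): elements of S = ℂ². -/
abbrev Spinor := Fin 2 → ℂ

/-- Two-index spinors. -/
abbrev Spinor2 := Fin 2 → Fin 2 → ℂ

/-- Four-index spinors. -/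
abbrev Spinor4 := Fin 2 → Fin 2 → Fin 2 → Fin 2 → ℂ

/-- The alternating spinor ε_{AB}, normalized by ε₀₁ = 1; the raised version
ε^{AB} has the same components. -/
def eps : Fin 2 → Fin 2 → ℂ := fun A B =>
  if A = 0 ∧ B = 1 then 1 else if A = 1 ∧ B = 0 then -1 else 0

/-- Index raising on one-index spinors: ξ^A = ε^{AB} ξ_B. -/
def up1 (ξ : Spinor) : Spinor := fun A => ∑ B, eps A B * ξ B

/-- The contraction α_Q β^Q. -/
def contr1 (α β : Spinor) : ℂ := ∑ Q, α Q * up1 β Q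

/-- Index raising on two-index spinors: ζ^{AB} = ε^{AA'} ε^{BB'} ζ_{A'B'}. -/
def up2 (ζ : Spinor2) : Spinor2 := fun A B => ∑ A', ∑ B', eps A A' * eps B B' * ζ A' B'

/-- The contraction ζ_{AB} η^{AB}. -/
def contr2 (ζ η : Spinor2) : ℂ := ∑ A, ∑ B, ζ A B * up2 η A B

/-- Index raising on four-index spinors. -/
def up4 (Ψ : Spinor4) : Spinor4 := fun A B C D =>
  ∑ A', ∑ B', ∑ C', ∑ D', eps A A' * eps B B' * eps C C' * eps D D' * Ψ A' B' C' D'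

/-- The symmetrized product α_{(A} β_{B)}. -/
def symPair (α β : Spinor) : Spinor2 := fun A B => (α A * β B + α B * β A) / 2

/-- Total symmetrization of a four-index object. -/
def sym4 (T : Spinor4) : Spinor4 := fun A B C D =>
  (∑ σ : Equiv.Perm (Fin 4),
    T (![A, B, C, D] (σ 0)) (![A, B, C, D] (σ 1)) (![A, B, C, D] (σ 2)) (![A, B, C, D] (σ 3))) / 24

/-- The symmetrized product α_{(A} α_B β_C β_{D)}. -/
def symAABB (α β : Spinor) : Spinor4 := sym4 (fun A B C D => α A * α B * β C * β D)

/-- Total symmetry of a four-index spinor (membership in Sym⁴). -/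
def TotallySymmetric4 (Ψ : Spinor4) : Prop :=
  ∀ A B C D, Ψ A B C D = Ψ B A C D ∧ Ψ A B C D = Ψ A C B D ∧ Ψ A B C D = Ψ A B D C

/-- The algebraic condition spinor Ψ_{(ABC}{}^F κ_{D)F}, where
Ψ_{ABC}{}^F = ε^{FE} Ψ_{ABCE}. -/
def algCond (Ψ : Spinor4) (κ : Spinor2) : Spinor4 :=
  sym4 (fun A B C D => ∑ F, (∑ E, eps F E * Ψ A B C E) * κ D F)

/-! Contracting Ψ with `o` gives the totally symmetric spinor `χ_{ABC} = Ψ_{ABC}{}^F o_F`, and the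
condition reads `χ_{(ABC} o_{D)} = 0`. In components this says that the binary cubic form of `χ`
times the linear form of `o` vanishes; since `o ≠ 0`, `χ = 0`. Then every slot of `Ψ` is
proportional to `o`, `o_i Ψ_{ABCD} = o_D Ψ_{ABCi}`, and choosing `i` with `o_i ≠ 0` gives
`Ψ = (Ψ_{iiii} / o_i⁴) o o o o`. -/

theorem sum_perm_fin_four {M : Type*} [AddCommMonoid M] (g : Fin 4 → Fin 4 → Fin 4 → Fin 4 → M) :
    ∑ σ : Equiv.Perm (Fin 4), g (σ 0) (σ 1) (σ 2) (σ 3) =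
      g 0 1 2 3 + g 0 1 3 2 + g 0 2 1 3 + g 0 2 3 1 + g 0 3 1 2 + g 0 3 2 1 +
      g 1 0 2 3 + g 1 0 3 2 + g 1 2 0 3 + g 1 2 3 0 + g 1 3 0 2 + g 1 3 2 0 +
      g 2 0 1 3 + g 2 0 3 1 + g 2 1 0 3 + g 2 1 3 0 + g 2 3 0 1 + g 2 3 1 0 +
      g 3 0 1 2 + g 3 0 2 1 + g 3 1 0 2 + g 3 1 2 0 + g 3 2 0 1 + g 3 2 1 0 := by
  -- Numerals are written as successors so that `decomposeFin_symm_apply_succ` fires.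
  have h₁ : (1 : Fin 2) = Fin.succ 0 := rfl
  have h₂ : (2 : Fin 3) = Fin.succ 1 := rfl
  have h₃ : (3 : Fin 4) = Fin.succ 2 := rfl
  simp only [Finset.univ_perm_fin_succ, Finset.sum_map, ← Finset.univ_product_univ,
    Finset.sum_product, Fin.sum_univ_succ]
  simp only [← Fin.succ_one_eq_two, ← Fin.succ_zero_eq_one, h₁, h₂, h₃, Equiv.toEmbedding_apply,
    Equiv.Perm.decomposeFin_symm_apply_succ, Equiv.Perm.decomposeFin_symm_apply_zero]
  simp only [Finset.univ_unique, Equiv.Perm.default_eq, Fin.isValue, Equiv.swap_self,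
    Fin.succ_zero_eq_one, Equiv.refl_apply, Fin.succ_one_eq_two, Fin.reduceSucc, Finset.sum_const,
    Finset.card_singleton, one_smul, Finset.univ_eq_empty, Finset.sum_empty, add_zero,
    Equiv.swap_apply_right, Equiv.swap_apply_def, Fin.succ_ne_zero, ↓reduceIte, one_ne_zero,
    Fin.succ_inj, Fin.reduceEq]
  abel

theorem sym4_apply (T : Spinor4) (A B C D : Fin 2) :
    sym4 T A B C D =
      (T A B C D + T A B D C + T A C B D + T A C D B + T A D B C + T A D C B +
        T B A C D + T B A D C + T B C A D + T B C D A + T B D A C + T B D C A +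
        T C A B D + T C A D B + T C B A D + T C B D A + T C D A B + T C D B A +
        T D A B C + T D A C B + T D B A C + T D B C A + T D C A B + T D C B A) / 24 := by
  rw [sym4, sum_perm_fin_four fun i j k l => T (![A, B, C, D] i) (![A, B, C, D] j)
    (![A, B, C, D] k) (![A, B, C, D] l)]
  simp

theorem Spinor.ne_zero_iff {o : Spinor} : o ≠ 0 ↔ o 0 ≠ 0 ∨ o 1 ≠ 0 := by
  rw [Ne, funext_iff, Fin.forall_fin_two]
  tauto

abbrev Spinor3 := Fin 2 → Fin 2 → Fin 2 → ℂ

def TotallySymmetric3 (χ : Spinor3) : Prop :=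
  ∀ A B C, χ A B C = χ B A C ∧ χ A B C = χ A C B

namespace TotallySymmetric3

variable {χ : Spinor3}

theorem swap₁₂ (h : TotallySymmetric3 χ) (A B C : Fin 2) : χ A B C = χ B A C := (h A B C).1

theorem swap₂₃ (h : TotallySymmetric3 χ) (A B C : Fin 2) : χ A B C = χ A C B := (h A B C).2

end TotallySymmetric3

namespace TotallySymmetric4

variable {Ψ : Spinor4}

theorem swap₁₂ (h : TotallySymmetric4 Ψ) (A B C D : Fin 2) : Ψ A B C D = Ψ B A C D :=
  (h A B C D).1

theorem swap₂₃ (h : TotallySymmetric4 Ψ) (A B C D : Fin 2) : Ψ A B C D = Ψ A C B D :=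
  (h A B C D).2.1

theorem swap₃₄ (h : TotallySymmetric4 Ψ) (A B C D : Fin 2) : Ψ A B C D = Ψ A B D C :=
  (h A B C D).2.2

theorem rotate (h : TotallySymmetric4 Ψ) (A B C D : Fin 2) : Ψ A B C D = Ψ D A B C := by
  rw [h.swap₃₄, h.swap₂₃, h.swap₁₂]

end TotallySymmetric4

-- `Ψ_{ABC}{}^F o_F`
def contrLast (Ψ : Spinor4) (o : Spinor) : Spinor3 :=
  fun A B C => ∑ F, (∑ E, eps F E * Ψ A B C E) * o F

theorem contrLast_apply (Ψ : Spinor4) (o : Spinor) (A B C : Fin 2) :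
    contrLast Ψ o A B C = o 0 * Ψ A B C 1 - o 1 * Ψ A B C 0 := by
  simp only [contrLast, eps, Fin.isValue, ite_mul, one_mul, neg_mul, zero_mul, Fin.sum_univ_two,
    zero_ne_one, and_false, ↓reduceIte, and_true, one_ne_zero, zero_add, add_zero]
  ring

theorem algCond_eq_sym4_contrLast {Ψ : Spinor4} {o : Spinor} {κ : Spinor2}
    (hκ : ∀ A B, κ A B = o A * o B) :
    algCond Ψ κ = sym4 (fun A B C D => contrLast Ψ o A B C * o D) := by
  simp only [algCond, contrLast, hκ, Finset.sum_mul, mul_comm (o _) (o _), mul_assoc]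

/-- The coefficients of `(a x + b y) (c₀ x³ + 3 c₁ x² y + 3 c₂ x y² + c₃ y³)`, up to the factor `3`
in the middle one. -/
theorem eq_zero_of_linear_mul_cubic_eq_zero {K : Type*} [Field K] [CharZero K]
    {a b c₀ c₁ c₂ c₃ : K} (hab : a ≠ 0 ∨ b ≠ 0)
    (h₀ : a * c₀ = 0) (h₁ : b * c₀ + 3 * a * c₁ = 0) (h₂ : b * c₁ + a * c₂ = 0)
    (h₃ : 3 * b * c₂ + a * c₃ = 0) (h₄ : b * c₃ = 0) :
    c₀ = 0 ∧ c₁ = 0 ∧ c₂ = 0 ∧ c₃ = 0 := by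
  rcases hab with ha | hb
  · have e₀ : c₀ = 0 := by simpa [ha] using h₀
    have e₁ : c₁ = 0 := by simpa [e₀, ha] using h₁
    have e₂ : c₂ = 0 := by simpa [e₁, ha] using h₂
    have e₃ : c₃ = 0 := by simpa [e₂, ha] using h₃
    exact ⟨e₀, e₁, e₂, e₃⟩
  · have e₃ : c₃ = 0 := by simpa [hb] using h₄
    have e₂ : c₂ = 0 := by simpa [e₃, hb] using h₃
    have e₁ : c₁ = 0 := by simpa [e₂, hb] using h₂
    have e₀ : c₀ = 0 := by simpa [e₁, hb] using h₁
    exact ⟨e₀, e₁, e₂, e₃⟩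

theorem TotallySymmetric3.eq_zero_of_sym4_mul_eq_zero {χ : Spinor3} (hχ : TotallySymmetric3 χ)
    {o : Spinor} (ho : o ≠ 0) (h : ∀ A B C D, sym4 (fun A B C D => χ A B C * o D) A B C D = 0) :
    χ = 0 := by
  have h₀ := h 0 0 0 0
  have h₁ := h 0 0 0 1
  have h₂ := h 0 0 1 1
  have h₃ := h 0 1 1 1
  have h₄ := h 1 1 1 1
  -- The swap lemmas are permutative, so `simp` uses them as ordered rewrites and sorts indices.
  simp only [sym4_apply, hχ.swap₁₂, hχ.swap₂₃] at h₀ h₁ h₂ h₃ h₄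
  obtain ⟨e₀, e₁, e₂, e₃⟩ := eq_zero_of_linear_mul_cubic_eq_zero
    (c₀ := χ 0 0 0) (c₁ := χ 0 0 1) (c₂ := χ 0 1 1) (c₃ := χ 1 1 1) (Spinor.ne_zero_iff.mp ho)
    (by linear_combination h₀) (by linear_combination 4 * h₁) (by linear_combination 2 * h₂)
    (by linear_combination 4 * h₃) (by linear_combination h₄)
  funext A B C
  fin_cases A <;> fin_cases B <;> fin_cases C <;>
    simp only [Fin.zero_eta, Fin.mk_one, Fin.isValue, hχ.swap₁₂, hχ.swap₂₃, Pi.zero_apply,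
      e₀, e₁, e₂, e₃]

namespace TotallySymmetric4

variable {Ψ : Spinor4}

theorem contrLast_symm (h : TotallySymmetric4 Ψ) (o : Spinor) :
    TotallySymmetric3 (contrLast Ψ o) :=
  fun A B C => by
    simp only [contrLast_apply]
    exact ⟨by rw [h.swap₁₂ A B C 0, h.swap₁₂ A B C 1], by rw [h.swap₂₃ A B C 0, h.swap₂₃ A B C 1]⟩

theorem exists_eq_mul_of_contrLast_eq_zero (h : TotallySymmetric4 Ψ) {o : Spinor} (ho : o ≠ 0)
    (hc : contrLast Ψ o = 0) :
    ∃ ψ : ℂ, ∀ A B C D, Ψ A B C D = ψ * o A * o B * o C * o D := by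
  obtain ⟨i, hi⟩ := Function.ne_iff.mp ho
  have slot : ∀ A B C D, o i * Ψ A B C D = o D * Ψ i A B C := by
    intro A B C D
    have hABC : o 0 * Ψ A B C 1 - o 1 * Ψ A B C 0 = 0 := by
      rw [← contrLast_apply, hc, Pi.zero_apply, Pi.zero_apply, Pi.zero_apply]
    rw [← h.rotate A B C i]
    fin_cases i <;> fin_cases D <;> simp only [Fin.zero_eta, Fin.mk_one, Fin.isValue]
    · linear_combination hABC
    · linear_combination -hABC
  refine ⟨Ψ i i i i / o i ^ 4, fun A B C D => ?_⟩
  field_simp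
  rw [eq_div_iff (pow_ne_zero 4 hi)]
  linear_combination o i ^ 3 * slot A B C D + o D * o i ^ 2 * slot i A B C
    + o D * o C * o i * slot i i A B + o D * o C * o B * slot i i i A

end TotallySymmetric4

/-- if o_A is nonzero, κ_{AB} = o_A o_B, and the totally symmetric
Ψ_{ABCD} satisfies Ψ_{(ABC}{}^F κ_{D)F} = 0, then Ψ_{ABCD} = ψ o_A o_B o_C o_D
for some scalar ψ (type N). -/
theorem typeN_from_algebraic_condition (o : Spinor) (ho : o ≠ 0)
    (κ : Spinor2) (hκ : ∀ A B, κ A B = o A * o B)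
    (Ψ : Spinor4) (hsym : TotallySymmetric4 Ψ)
    (halg : ∀ A B C D, algCond Ψ κ A B C D = 0) :
    ∃ ψ : ℂ, ∀ A B C D, Ψ A B C D = ψ * o A * o B * o C * o D := by
  rw [algCond_eq_sym4_contrLast hκ] at halg
  exact hsym.exists_eq_mul_of_contrLast_eq_zero ho
    ((hsym.contrLast_symm o).eq_zero_of_sym4_mul_eq_zero ho halg)
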